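/- arXiv:1309.5116 — 3 statements merged into one kernel-verified Lean document; each statement's English description precedes it below -/
import Mathlib

section
/- Let n ≥ 2 be an even integer. For integers 0 ≤ k ≤ n and -n/2 ≤ i ≤ n/2, let u_k[i] be the coefficient of x^{n-k} in the polynomial Π_{m=1}^{n} (x - n - 2i + 2m - 1), and let v_k[i] = Σ_{r=0}^{i+n/2} (-1)^r · C(n+1, r) · (n+2i-2r+1)^{n-k}. Then for all integers i, j with -n/2 ≤ i, j ≤ n/2, Σ_{k=0}^{n} u_k[i] · v_k[j] = 2^n · n! if i = j, and equals 0 otherwise. -/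
/-!
Let `P_i` be the monic polynomial with roots `n + 2i - 2m + 1` (`1 ≤ m ≤ n`), so that
`u_k[i]` is its coefficient of `x^(n-k)`. Summing over `k` first gives
`Σ_k u_k[i] v_k[j] = Σ_{r ≤ j + n/2} (-1)^r C(n+1, r) P_i(n + 2j - 2r + 1)`.
Over the full range `0 ≤ r ≤ n + 1` this is an (n+1)-st finite difference of a polynomial of
degree `n` in `r`, hence zero, and `P_i(n + 2j - 2r + 1) = 0` whenever
`j - i + 1 ≤ r ≤ j - i + n`.
For `j < i` every term of the partial sum vanishes; for `i ≤ j` the partial sum is minus the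
term `r = n + 1`, which vanishes unless `i = j`, where it is `(-1)^n (-2)^n n! = 2^n n!`.
-/

/-- `u_k[i]`: the coefficient of `x^{n-k}` in `Π_{m=1}^{n} (x - n - 2i + 2m - 1)`. -/
noncomputable def rightEig (n : ℕ) (k : ℕ) (i : ℤ) : ℤ :=
  ((∏ m ∈ Finset.Icc 1 n,
      ((Polynomial.X : Polynomial ℤ) -
        Polynomial.C ((n : ℤ) + 2 * i - 2 * (m : ℤ) + 1))).coeff (n - k))

/-- `v_k[i] = Σ_{r=0}^{i+n/2} (-1)^r C(n+1,r) (n+2i-2r+1)^{n-k}`. -/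
def leftEig (n : ℕ) (k : ℕ) (i : ℤ) : ℤ :=
  ∑ r ∈ Finset.range ((i + (n : ℤ) / 2).toNat + 1),
    (-1 : ℤ) ^ r * (Nat.choose (n + 1) r : ℤ) * ((n : ℤ) + 2 * i - 2 * r + 1) ^ (n - k)

open Polynomial Finset
open scoped Nat

namespace Polynomial

variable {R : Type*} [CommRing R]

theorem sum_range_alternating_choose_mul_eval_eq_zero {P : R[X]} {n : ℕ}
    (hP : P.natDegree ≤ n) :
    ∑ r ∈ range (n + 2), (-1 : R) ^ r * (n + 1).choose r * P.eval (r : R) = 0 := by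
  have h := congr_fun (fwdDiff_iter_eq_zero_of_degree_lt (Nat.lt_succ_of_le hP)) 0
  rw [fwdDiff_iter_eq_sum_shift, Pi.zero_apply] at h
  rw [← neg_one_pow_mul_eq_zero_iff (n := n + 1), mul_sum]
  refine .trans (sum_congr rfl fun k hk => ?_) h
  have hsign : (-1 : R) ^ (n + 1) = (-1) ^ (n + 1 - k) * (-1) ^ k := by
    rw [← pow_add, Nat.sub_add_cancel (Nat.lt_succ_iff.mp (mem_range.mp hk))]
  have hsq : (-1 : R) ^ k * (-1) ^ k = 1 := by rw [← mul_pow, neg_one_mul, neg_neg, one_pow]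
  simp only [zero_add, nsmul_one, zsmul_eq_mul, Int.cast_mul, Int.cast_pow, Int.cast_neg,
    Int.cast_one, Int.cast_natCast, Nat.succ_eq_add_one, hsign]
  linear_combination ((-1) ^ (n + 1 - k) * ((n + 1).choose k : R) * P.eval (k : R)) * hsq

theorem sum_range_alternating_choose_mul_eval_linear_eq_zero {P : R[X]} {n : ℕ}
    (hP : P.natDegree ≤ n) (a b : R) :
    ∑ r ∈ range (n + 2), (-1 : R) ^ r * (n + 1).choose r * P.eval (a * r + b) = 0 := by
  have hdeg : (P.comp (C a * X + C b)).natDegree ≤ n :=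
    natDegree_comp_le.trans <| by
      simpa using Nat.mul_le_mul hP (natDegree_linear_le (a := a) (b := b))
  simpa using sum_range_alternating_choose_mul_eval_eq_zero hdeg

theorem sum_range_coeff_sub_mul_pow_sub {P : R[X]} {n : ℕ} (hP : P.natDegree ≤ n) (x : R) :
    ∑ k ∈ range (n + 1), P.coeff (n - k) * x ^ (n - k) = P.eval x := by
  rw [eval_eq_sum_range' (Nat.lt_succ_of_le hP),
    ← sum_range_reflect (fun k => P.coeff k * x ^ k) (n + 1), add_tsub_cancel_right]

end Polynomial

theorem prod_Icc_add_one_sub_eq_factorial (n : ℕ) :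
    ∏ m ∈ Icc 1 n, ((n : ℤ) + 1 - m) = n ! := by
  calc ∏ m ∈ Icc 1 n, ((n : ℤ) + 1 - m) = ∏ m ∈ Icc 1 n, (m : ℤ) :=
        prod_nbij' (n + 1 - ·) (n + 1 - ·) (by simp; omega) (by simp; omega) (by simp; omega)
          (by simp; omega) (by simp; omega)
    _ = n ! := by rw [← Nat.cast_prod, ← Ico_add_one_right_eq_Icc, prod_Ico_id_eq_factorial]

noncomputable def rightEigPoly (n : ℕ) (i : ℤ) : ℤ[X] :=
  ∏ m ∈ Icc 1 n, (X - C ((n : ℤ) + 2 * i - 2 * (m : ℤ) + 1))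

variable {n : ℕ} {i j : ℤ}

theorem natDegree_rightEigPoly : (rightEigPoly n i).natDegree = n := by
  rw [rightEigPoly, natDegree_finsetProd_X_sub_C_eq_card, Nat.card_Icc, add_tsub_cancel_right]

theorem eval_rightEigPoly_eq_zero {r : ℤ} (h₁ : j - i + 1 ≤ r) (h₂ : r ≤ j - i + n) :
    (rightEigPoly n i).eval ((n : ℤ) + 2 * j - 2 * r + 1) = 0 := by
  rw [rightEigPoly, eval_prod]
  refine prod_eq_zero (i := (i + r - j).toNat) (by simp; omega) ?_
  simp only [eval_sub, eval_X, eval_C]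
  omega

theorem eval_rightEigPoly_two_mul_sub :
    (rightEigPoly n i).eval (2 * i - n - 1) = (-2) ^ n * n ! := by
  calc (rightEigPoly n i).eval (2 * i - n - 1)
        = ∏ m ∈ Icc 1 n, (-2) * ((n : ℤ) + 1 - m) := by
        rw [rightEigPoly, eval_prod]
        exact prod_congr rfl fun m _ => by simp only [eval_sub, eval_X, eval_C]; ring
    _ = (-2) ^ n * n ! := by
        rw [prod_mul_distrib, prod_const, Nat.card_Icc, add_tsub_cancel_right,
          prod_Icc_add_one_sub_eq_factorial]

theorem sum_rightEig_mul_leftEig (n : ℕ) (i j : ℤ) :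
    ∑ k ∈ range (n + 1), rightEig n k i * leftEig n k j =
      ∑ r ∈ range ((j + (n : ℤ) / 2).toNat + 1),
        (-1 : ℤ) ^ r * (n + 1).choose r *
          (rightEigPoly n i).eval ((n : ℤ) + 2 * j - 2 * r + 1) := by
  simp only [leftEig, mul_sum]
  rw [sum_comm]
  refine sum_congr rfl fun r _ => ?_
  rw [← sum_range_coeff_sub_mul_pow_sub natDegree_rightEigPoly.le, mul_sum]
  exact sum_congr rfl fun k _ => by rw [rightEig, ← rightEigPoly]; ring

theorem sum_range_alternating_choose_mul_eval_rightEigPoly (n : ℕ) (i j : ℤ) :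
    ∑ r ∈ range (n + 2),
      (-1 : ℤ) ^ r * (n + 1).choose r *
        (rightEigPoly n i).eval ((n : ℤ) + 2 * j - 2 * r + 1) = 0 :=
  .trans (sum_congr rfl fun r _ => by congr 2; ring) <|
    sum_range_alternating_choose_mul_eval_linear_eq_zero natDegree_rightEigPoly.le
      (-2) (n + 2 * j + 1)

theorem stmt9_general (n : ℕ) (hneven : Even n)
    (i j : ℤ) (hi1 : -(n : ℤ) / 2 ≤ i) (hi2 : i ≤ (n : ℤ) / 2)
    (hj1 : -(n : ℤ) / 2 ≤ j) (hj2 : j ≤ (n : ℤ) / 2) :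
    ∑ k ∈ Finset.range (n + 1), rightEig n k i * leftEig n k j
      = if i = j then (2 ^ n * Nat.factorial n : ℤ) else 0 := by
  obtain ⟨a, ha⟩ := hneven
  set g : ℕ → ℤ := fun r =>
    (-1 : ℤ) ^ r * (n + 1).choose r * (rightEigPoly n i).eval ((n : ℤ) + 2 * j - 2 * r + 1)
  have hg : ∀ r : ℕ, j - i + 1 ≤ r → r ≤ j - i + n → g r = 0 := fun r h₁ h₂ => by
    simp only [g, eval_rightEigPoly_eq_zero h₁ h₂, mul_zero]
  rw [sum_rightEig_mul_leftEig]
  set R := (j + (n : ℤ) / 2).toNat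
  have hR : (R : ℤ) = j + a := by omega
  rcases lt_or_ge j i with hji | hij
  · rw [if_neg hji.ne', sum_eq_zero fun r hr => hg r (by omega) (by simp at hr; omega)]
  have hsum : ∑ r ∈ range (R + 1), g r = -g (n + 1) := by
    have hsplit := sum_range_add_sum_Ico g (m := R + 1) (n := n + 2) (by omega)
    rw [sum_range_alternating_choose_mul_eval_rightEigPoly, sum_Ico_succ_top (by omega),
      sum_eq_zero (s := Ico (R + 1) (n + 1)) fun r hr => hg r (by simp at hr; omega)
        (by simp at hr; omega)] at hsplit
    linear_combination hsplit
  rw [hsum]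
  rcases hij.lt_or_eq with hij | rfl
  · rw [if_neg hij.ne, hg (n + 1) (by omega) (by omega), neg_zero]
  have htop : (n : ℤ) + 2 * i - 2 * (n + 1 : ℕ) + 1 = 2 * i - n - 1 := by push_cast; ring
  have hsign : (-1 : ℤ) ^ (n + 1) * (-2) ^ n = -2 ^ n := by
    rw [pow_succ, mul_right_comm, ← mul_pow]; norm_num
  simp only [g, htop, eval_rightEigPoly_two_mul_sub, Nat.choose_self, Nat.cast_one, mul_one,
    if_true]
  linear_combination (-(n ! : ℤ)) * hsign

theorem stmt9 (n : ℕ) (hneven : Even n) (hn : 2 ≤ n)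
    (i j : ℤ) (hi1 : -(n : ℤ) / 2 ≤ i) (hi2 : i ≤ (n : ℤ) / 2)
    (hj1 : -(n : ℤ) / 2 ≤ j) (hj2 : j ≤ (n : ℤ) / 2) :
    ∑ k ∈ Finset.range (n + 1), rightEig n k i * leftEig n k j
      = if i = j then (2 ^ n * Nat.factorial n : ℤ) else 0 :=
  stmt9_general n hneven i j hi1 hi2 hj1 hj2
end

section
/- Fix an even integer n ≥ 2, and for each odd integer c ≥ 3 let K_c denote the balanced carries transition matrix base c for adding n numbers, indexed by integers from -n/2 to n/2. Then for all odd integers a, b ≥ 3 and all integers i, j with -n/2 ≤ i, j ≤ n/2, Σ_{m=-n/2}^{n/2} K_a(i,m) · K_b(m,j) = K_{ab}(i,j); that is, K_a K_b = K_{ab} as matrices. -/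
/-!
A tuple of balanced base-`ab` digits is the same as a pair of tuples `(X, Y)` of balanced base-`a`
and base-`b` digits, via `Z = X + a • Y`. Writing `balDiv c z` for the quotient of `z` by `c`
rounded to the nearest integer, `N_c(i, j)` counts the digit tuples `X` with
`balDiv c (i + ∑ X) = j`, and balanced division by `ab` is balanced division by `a` followed by
balanced division by `b`: `balDiv (a * b) (z + a * t) = balDiv b (balDiv a z + t)`. Summing over
the intermediate carry `m = balDiv a (i + ∑ X)`, which stays in `[-n/2, n/2]`, gives
`K_a K_b = K_{ab}`.
-/

/-- The number of `n`-tuples of balanced base-`c` digits `(X_1, …, X_n)`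
(integers with `|X_k| ≤ (c-1)/2`) such that
`j*c - (c-1)/2 ≤ i + X_1 + ⋯ + X_n ≤ j*c + (c-1)/2`. -/
noncomputable def balN (c : ℤ) (n : ℕ) (i j : ℤ) : ℕ :=
  (Finset.filter
    (fun X : Fin n → ℤ =>
      j * c - (c - 1) / 2 ≤ i + ∑ k, X k ∧ i + ∑ k, X k ≤ j * c + (c - 1) / 2)
    (Fintype.piFinset fun _ : Fin n => Finset.Icc (-((c - 1) / 2)) ((c - 1) / 2))).card

/-- The balanced carries transition probability `K_c(i,j) = c^{-n} N_c(i,j)`. -/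
noncomputable def balK (c : ℤ) (n : ℕ) (i j : ℤ) : ℚ := (balN c n i j : ℚ) / (c : ℚ) ^ n

open Finset

namespace BalancedCarries

noncomputable def balDigits (c : ℤ) : Finset ℤ := Icc (-((c - 1) / 2)) ((c - 1) / 2)

noncomputable def digitTuples (c : ℤ) (n : ℕ) : Finset (Fin n → ℤ) :=
  Fintype.piFinset fun _ => balDigits c

def balDiv (c z : ℤ) : ℤ := (z + (c - 1) / 2) / c

variable {a b c : ℤ}

theorem mem_balDigits {z : ℤ} :
    z ∈ balDigits c ↔ -((c - 1) / 2) ≤ z ∧ z ≤ (c - 1) / 2 :=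
  mem_Icc

theorem mem_digitTuples {n : ℕ} {X : Fin n → ℤ} :
    X ∈ digitTuples c n ↔ ∀ k, X k ∈ balDigits c :=
  Fintype.mem_piFinset

theorem balDiv_eq_iff (hc : Odd c) (hc0 : 0 < c) {z q : ℤ} :
    balDiv c z = q ↔ z - c * q ∈ balDigits c := by
  obtain ⟨γ, rfl⟩ := hc
  have hγ : (2 * γ + 1 - 1) / 2 = γ := by omega
  rw [mem_balDigits, balDiv, hγ]
  constructor
  · rintro rfl
    have := Int.emod_nonneg (z + γ) hc0.ne'
    have := Int.emod_lt_of_pos (z + γ) hc0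
    have := Int.mul_ediv_add_emod (z + γ) (2 * γ + 1)
    constructor <;> linarith
  · rintro ⟨h₁, h₂⟩
    exact ((Int.ediv_emod_unique (r := z - (2 * γ + 1) * q + γ) hc0).2
      ⟨by ring, by omega, by omega⟩).1

theorem sub_mul_balDiv_mem_balDigits (hc : Odd c) (hc0 : 0 < c) (z : ℤ) :
    z - c * balDiv c z ∈ balDigits c :=
  (balDiv_eq_iff hc hc0).1 rfl

theorem balDiv_eq_zero_iff (hc : Odd c) (hc0 : 0 < c) {z : ℤ} :
    balDiv c z = 0 ↔ z ∈ balDigits c := by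
  rw [balDiv_eq_iff hc hc0, mul_zero, sub_zero]

theorem add_mul_mem_balDigits_mul (ha : Odd a) (ha0 : 0 < a) (hb : Odd b) {x y : ℤ}
    (hx : x ∈ balDigits a) (hy : y ∈ balDigits b) : x + a * y ∈ balDigits (a * b) := by
  obtain ⟨α, rfl⟩ := ha
  obtain ⟨β, rfl⟩ := hb
  have hγ : ((2 * α + 1) * (2 * β + 1) - 1) / 2 = α + (2 * α + 1) * β := by
    rw [show (2 * α + 1) * (2 * β + 1) - 1 = 2 * (α + (2 * α + 1) * β) by ring]
    omega
  rw [mem_balDigits, hγ]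
  rw [mem_balDigits, show (2 * α + 1 - 1) / 2 = α by omega] at hx
  rw [mem_balDigits, show (2 * β + 1 - 1) / 2 = β by omega] at hy
  have h₁ := mul_le_mul_of_nonneg_left hy.1 ha0.le
  have h₂ := mul_le_mul_of_nonneg_left hy.2 ha0.le
  constructor <;> linarith

theorem balDiv_mul_add_mul (ha : Odd a) (ha0 : 0 < a) (hb : Odd b) (hb0 : 0 < b) (z t : ℤ) :
    balDiv (a * b) (z + a * t) = balDiv b (balDiv a z + t) := by
  rw [balDiv_eq_iff (ha.mul hb) (mul_pos ha0 hb0)]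
  have hr₁ := sub_mul_balDiv_mem_balDigits ha ha0 z
  have hr₂ := sub_mul_balDiv_mem_balDigits hb hb0 (balDiv a z + t)
  convert add_mul_mem_balDigits_mul ha ha0 hb hr₁ hr₂ using 1
  ring

theorem balDiv_mem_balDigits (ha : Odd a) (ha0 : 0 < a) (hb : Odd b) (hb0 : 0 < b) {z : ℤ}
    (hz : z ∈ balDigits (a * b)) : balDiv a z ∈ balDigits b := by
  have h := balDiv_mul_add_mul ha ha0 hb hb0 z 0
  rw [mul_zero, add_zero, add_zero] at h
  rwa [← balDiv_eq_zero_iff hb hb0, ← h, balDiv_eq_zero_iff (ha.mul hb) (mul_pos ha0 hb0)]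

theorem balDiv_mem_Icc (hc0 : 0 < c) {N z : ℤ} (hz : z ∈ Icc (-(c * N)) (c * N)) :
    balDiv c z ∈ Icc (-N) N := by
  rw [mem_Icc] at hz ⊢
  have hγ₀ : 0 ≤ (c - 1) / 2 := by omega
  have hγ₁ : (c - 1) / 2 < c := by omega
  constructor
  · rw [balDiv, Int.le_ediv_iff_mul_le hc0]
    linarith
  · rw [balDiv, ← Int.lt_add_one_iff, Int.ediv_lt_iff_lt_mul hc0]
    linarith

theorem sum_mem_Icc_of_mem_digitTuples {n : ℕ} {X : Fin n → ℤ} (hX : X ∈ digitTuples c n) :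
    ∑ k, X k ∈ Icc (-(n * ((c - 1) / 2))) (n * ((c - 1) / 2)) := by
  rw [mem_digitTuples] at hX
  have h₁ := card_nsmul_le_sum univ X _ fun k _ => (mem_balDigits.1 (hX k)).1
  have h₂ := sum_le_card_nsmul univ X _ fun k _ => (mem_balDigits.1 (hX k)).2
  simp only [card_univ, Fintype.card_fin, nsmul_eq_mul] at h₁ h₂
  exact mem_Icc.2 ⟨by linarith, h₂⟩

theorem balDiv_add_sum_mem_Icc (hc0 : 0 < c) {n : ℕ} {N i : ℤ} (hn : (n : ℤ) ≤ 2 * N)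
    (hi : i ∈ Icc (-N) N) {X : Fin n → ℤ} (hX : X ∈ digitTuples c n) :
    balDiv c (i + ∑ k, X k) ∈ Icc (-N) N := by
  have hs := mem_Icc.1 (sum_mem_Icc_of_mem_digitTuples hX)
  rw [mem_Icc] at hi
  have hnγ : (n : ℤ) * ((c - 1) / 2) ≤ 2 * N * ((c - 1) / 2) :=
    mul_le_mul_of_nonneg_right hn (by omega)
  have hcN : (2 * ((c - 1) / 2) + 1) * N ≤ c * N :=
    mul_le_mul_of_nonneg_right (by omega) (by omega)
  apply balDiv_mem_Icc hc0
  rw [mem_Icc]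
  constructor <;> linarith

theorem balN_eq_card (hc : Odd c) (hc0 : 0 < c) (n : ℕ) (i j : ℤ) :
    balN c n i j = #{X ∈ digitTuples c n | balDiv c (i + ∑ k, X k) = j} := by
  rw [balN]
  congr 1
  ext X
  simp only [mem_filter, balDiv_eq_iff hc hc0, mem_balDigits]
  exact and_congr Iff.rfl
    ⟨fun h => ⟨by linarith, by linarith⟩, fun h => ⟨by linarith, by linarith⟩⟩

theorem card_filter_digitTuples_mul (ha : Odd a) (ha0 : 0 < a) (hb : Odd b) (hb0 : 0 < b)
    {n : ℕ} (p : (Fin n → ℤ) → Prop) [DecidablePred p] :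
    #{XY ∈ digitTuples a n ×ˢ digitTuples b n | p (XY.1 + a • XY.2)} =
      #{Z ∈ digitTuples (a * b) n | p Z} := by
  apply card_nbij' (fun XY => XY.1 + a • XY.2)
    (fun Z => (fun k => Z k - a * balDiv a (Z k), fun k => balDiv a (Z k)))
  · rintro ⟨X, Y⟩ hXY
    simp only [coe_filter, Set.mem_ofPred_eq, mem_product, mem_digitTuples] at hXY ⊢
    exact ⟨fun k => add_mul_mem_balDigits_mul ha ha0 hb (hXY.1.1 k) (hXY.1.2 k), hXY.2⟩
  · intro Z hZ
    simp only [coe_filter, Set.mem_ofPred_eq, mem_product, mem_digitTuples] at hZ ⊢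
    refine ⟨⟨fun k => sub_mul_balDiv_mem_balDigits ha ha0 (Z k),
      fun k => balDiv_mem_balDigits ha ha0 hb hb0 (hZ.1 k)⟩, ?_⟩
    convert hZ.2 using 2
    ext k
    simp
  · rintro ⟨X, Y⟩ hXY
    simp only [coe_filter, Set.mem_ofPred_eq, mem_product, mem_digitTuples] at hXY
    have hY : ∀ k, balDiv a (X k + a * Y k) = Y k := fun k =>
      (balDiv_eq_iff ha ha0).2 (by simpa using hXY.1.1 k)
    ext k <;> simp [hY]
  · intro Z _
    ext k
    simp

theorem sum_balN_mul_balN (ha : Odd a) (ha0 : 0 < a) (hb : Odd b) (hb0 : 0 < b) {n : ℕ}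
    {i j : ℤ} {S : Finset ℤ} (hS : ∀ X ∈ digitTuples a n, balDiv a (i + ∑ k, X k) ∈ S) :
    ∑ m ∈ S, balN a n i m * balN b n m j = balN (a * b) n i j := by
  set carry : (Fin n → ℤ) → ℤ := fun X => balDiv a (i + ∑ k, X k)
  calc ∑ m ∈ S, balN a n i m * balN b n m j
      = ∑ m ∈ S, ∑ X ∈ digitTuples a n with carry X = m, balN b n (carry X) j := by
        refine sum_congr rfl fun m _ => ?_
        rw [balN_eq_card ha ha0, card_eq_sum_ones, sum_mul, one_mul]
        exact sum_congr rfl fun X hX => by rw [(mem_filter.1 hX).2]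
    _ = ∑ X ∈ digitTuples a n, balN b n (carry X) j := sum_fiberwise_of_maps_to hS _
    _ = #{XY ∈ digitTuples a n ×ˢ digitTuples b n |
          balDiv b (carry XY.1 + ∑ k, XY.2 k) = j} := by
        simp only [balN_eq_card hb hb0, card_filter, sum_product]
    _ = #{XY ∈ digitTuples a n ×ˢ digitTuples b n |
          balDiv (a * b) (i + ∑ k, (XY.1 + a • XY.2) k) = j} := by
        congr 1
        ext XY
        simp only [mem_filter, Pi.add_apply, Pi.smul_apply, smul_eq_mul, sum_add_distrib,
          ← mul_sum, ← add_assoc, balDiv_mul_add_mul ha ha0 hb hb0, carry]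
    _ = balN (a * b) n i j := by
        rw [card_filter_digitTuples_mul ha ha0 hb hb0 fun Z => balDiv (a * b) (i + ∑ k, Z k) = j,
          balN_eq_card (ha.mul hb) (mul_pos ha0 hb0)]

end BalancedCarries

open BalancedCarries in
theorem stmt12_general (n : ℕ) (hneven : Even n)
    (a b : ℤ) (ha : Odd a) (ha3 : 3 ≤ a) (hb : Odd b) (hb3 : 3 ≤ b)
    (i j : ℤ) (hi1 : -(n : ℤ) / 2 ≤ i) (hi2 : i ≤ (n : ℤ) / 2) :
    ∑ m ∈ Finset.Icc (-(n : ℤ) / 2) ((n : ℤ) / 2), balK a n i m * balK b n m j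
      = balK (a * b) n i j := by
  have ha0 : 0 < a := by omega
  have hb0 : 0 < b := by omega
  obtain ⟨r, hr⟩ := hneven
  have hhalf : (n : ℤ) / 2 = r := by omega
  have hneg : -(n : ℤ) / 2 = -(r : ℤ) := by omega
  rw [hneg] at hi1
  rw [hhalf] at hi2
  rw [hneg, hhalf]
  have hcarry : ∀ X ∈ digitTuples a n, balDiv a (i + ∑ k, X k) ∈ Icc (-(r : ℤ)) r :=
    fun _ hX => balDiv_add_sum_mem_Icc ha0 (by omega) (mem_Icc.2 ⟨hi1, hi2⟩) hX
  simp only [balK, div_mul_div_comm, ← sum_div, Int.cast_mul, mul_pow]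
  rw [← sum_balN_mul_balN ha ha0 hb hb0 hcarry]
  norm_cast

theorem stmt12 (n : ℕ) (hneven : Even n) (hn : 2 ≤ n)
    (a b : ℤ) (ha : Odd a) (ha3 : 3 ≤ a) (hb : Odd b) (hb3 : 3 ≤ b)
    (i j : ℤ) (hi1 : -(n : ℤ) / 2 ≤ i) (hi2 : i ≤ (n : ℤ) / 2)
    (hj1 : -(n : ℤ) / 2 ≤ j) (hj2 : j ≤ (n : ℤ) / 2) :
    ∑ m ∈ Finset.Icc (-(n : ℤ) / 2) ((n : ℤ) / 2), balK a n i m * balK b n m j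
      = balK (a * b) n i j :=
  stmt12_general n hneven a b ha ha3 hb hb3 i j hi1 hi2
end

section
/- Let b ≥ 3 be an odd integer, set m = (b-1)/2, and let M be the m×m real matrix with (j,k) entry min(j,k). For every integer ℓ ≥ 0, the sum of all entries of M^ℓ satisfies Σ_{i=1}^{m} Σ_{j=1}^{m} (M^ℓ)_{ij} = (4/b) · Σ_{r=1}^{m} λ_r^ℓ · v_r², and the row-weighted sum satisfies Σ_{i=1}^{m} Σ_{j=1}^{m} i·(M^ℓ)_{ij} = (4/b) · Σ_{r=1}^{m} λ_r^ℓ · v_r · w_r, where λ_r = 1/(4·sin²((2r-1)π/(2b))), v_r = Σ_{j=1}^{m} sin((2r-1)jπ/b), and w_r = Σ_{j=1}^{m} j·sin((2r-1)jπ/b). -/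
/-- The `m × m` matrix with `(j,k)` entry `min(j,k)`, where rows and columns are
indexed `1, …, m` (so `Fin m` index `j` corresponds to row `j+1`). -/
def minMat (m : ℕ) : Matrix (Fin m) (Fin m) ℝ :=
  Matrix.of fun j k : Fin m => (min ((j : ℕ) + 1) ((k : ℕ) + 1) : ℝ)

/-- `λ_r = 1/(4 sin²((2r-1)π/(2b)))`. -/
noncomputable def lamEig (b : ℤ) (r : ℕ) : ℝ :=
  1 / (4 * Real.sin ((2 * (r : ℝ) - 1) * Real.pi / (2 * (b : ℝ))) ^ 2)

/-- `v_r = Σ_{j=1}^{m} sin((2r-1)jπ/b)` with `m = (b-1)/2`. -/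
noncomputable def vSum (b : ℤ) (m : ℕ) (r : ℕ) : ℝ :=
  ∑ j ∈ Finset.Icc 1 m, Real.sin ((2 * (r : ℝ) - 1) * (j : ℝ) * Real.pi / (b : ℝ))

/-- `w_r = Σ_{j=1}^{m} j sin((2r-1)jπ/b)` with `m = (b-1)/2`. -/
noncomputable def wSum (b : ℤ) (m : ℕ) (r : ℕ) : ℝ :=
  ∑ j ∈ Finset.Icc 1 m, (j : ℝ) * Real.sin ((2 * (r : ℝ) - 1) * (j : ℝ) * Real.pi / (b : ℝ))

/-! The columns `s_r = (sin ((2r-1) j π / b))_j` of the sine matrix `S` are eigenvectors of `M`: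
writing `min j k` as the number of `i ∈ [1, j]` with `i ≤ k` and telescoping twice gives
`M s_r = λ_r s_r`, the boundary term vanishing because `(2m+1)·(2r-1)π/(2b) = (2r-1)π/2`.
Product-to-sum and the same telescoping give `Sᵀ S = (b/4) • 1`, so
`M^ℓ = (4/b) • S diag(λ_r^ℓ) Sᵀ`, and summing its entries against the weights `1` and `i`
produces `v_r²` and `v_r w_r`. -/

open Real Finset Matrix

theorem sum_fin_succ_eq_sum_Icc {M : Type*} [AddCommMonoid M] (m : ℕ) (f : ℕ → M) :
    ∑ k : Fin m, f ((k : ℕ) + 1) = ∑ k ∈ Icc 1 m, f k := by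
  rw [Fin.sum_univ_eq_sum_range (fun k => f (k + 1)), range_eq_Ico, sum_Ico_add' f 0 m 1]
  rfl

theorem sum_Icc_natCast_min_mul {R : Type*} [Semiring R] (f : ℕ → R) (j m : ℕ) :
    ∑ k ∈ Icc 1 m, ((min j k : ℕ) : R) * f k = ∑ i ∈ Icc 1 j, ∑ k ∈ Icc i m, f k := by
  rw [sum_comm' (t' := Icc 1 m) (s' := fun k => Icc 1 (min j k))]
  · simp [sum_const, Nat.card_Icc]
  · intro i k; simp only [mem_Icc]; omega

theorem sum_sum_mul_mul_diagonal_mul_transpose {ι κ R : Type*} [Fintype ι] [Fintype κ]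
    [DecidableEq κ] [CommSemiring R] (P : Matrix ι κ R) (d : κ → R) (x : ι → R) :
    ∑ i, ∑ j, x i * (P * diagonal d * Pᵀ) i j = ∑ r, d r * (∑ j, P j r) * ∑ i, x i * P i r := by
  have entry : ∀ i j, (P * diagonal d * Pᵀ) i j = ∑ r, P i r * d r * P j r := fun i j => by
    rw [mul_apply]; simp only [mul_diagonal, transpose_apply]
  simp only [entry, mul_sum, sum_mul]
  rw [sum_comm_cycle]
  exact sum_congr rfl fun r _ => sum_congr rfl fun i _ => sum_congr rfl fun j _ => by ring

theorem two_sin_mul_sin_eq_cos_sub_cos (s x : ℝ) :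
    2 * sin s * sin x = cos (x - s) - cos (x + s) := by
  rw [cos_sub, cos_add]; ring

theorem two_sin_mul_cos_eq_sin_sub_sin (s x : ℝ) :
    2 * sin s * cos x = sin (x + s) - sin (x - s) := by
  rw [sin_add, sin_sub]; ring

theorem two_sin_mul_sum_Icc_sin_two_mul (s : ℝ) {i m : ℕ} (him : i ≤ m) :
    2 * sin s * ∑ k ∈ Icc i m, sin (2 * k * s)
      = cos ((2 * i - 1) * s) - cos ((2 * m + 1) * s) := by
  induction m, him using Nat.le_induction with
  | base => rw [Icc_self, sum_singleton, two_sin_mul_sin_eq_cos_sub_cos]; ring_nf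
  | succ n hn ih =>
    rw [sum_Icc_succ_top (by omega), mul_add, ih, two_sin_mul_sin_eq_cos_sub_cos]
    push_cast
    ring_nf

theorem two_sin_mul_sum_Icc_cos_two_mul (s : ℝ) (m : ℕ) :
    2 * sin s * ∑ k ∈ Icc 1 m, cos (2 * k * s) = sin ((2 * m + 1) * s) - sin s := by
  induction m with
  | zero => simp
  | succ n ih =>
    rw [sum_Icc_succ_top (by omega), mul_add, ih, two_sin_mul_cos_eq_sin_sub_sin]
    push_cast
    ring_nf

theorem two_sin_mul_sum_Icc_cos_odd_mul (s : ℝ) (m : ℕ) :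
    2 * sin s * ∑ k ∈ Icc 1 m, cos ((2 * k - 1) * s) = sin (2 * m * s) := by
  induction m with
  | zero => simp
  | succ n ih =>
    rw [sum_Icc_succ_top (by omega), mul_add, ih, two_sin_mul_cos_eq_sin_sub_sin]
    push_cast
    ring_nf

theorem four_sin_sq_mul_sum_Icc_min_mul_sin (s : ℝ) {j m : ℕ} (hjm : j ≤ m)
    (hm : cos ((2 * m + 1) * s) = 0) :
    4 * sin s ^ 2 * ∑ k ∈ Icc 1 m, ((min j k : ℕ) : ℝ) * sin (2 * k * s) = sin (2 * j * s) := by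
  have telescope : ∀ i ∈ Icc 1 j,
      2 * sin s * ∑ k ∈ Icc i m, sin (2 * k * s) = cos ((2 * i - 1) * s) := by
    intro i hi
    rw [two_sin_mul_sum_Icc_sin_two_mul s ((mem_Icc.mp hi).2.trans hjm), hm, sub_zero]
  calc 4 * sin s ^ 2 * ∑ k ∈ Icc 1 m, ((min j k : ℕ) : ℝ) * sin (2 * k * s)
      = 2 * sin s * ∑ i ∈ Icc 1 j, 2 * sin s * ∑ k ∈ Icc i m, sin (2 * k * s) := by
        rw [sum_Icc_natCast_min_mul, ← mul_sum]; ring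
    _ = 2 * sin s * ∑ i ∈ Icc 1 j, cos ((2 * i - 1) * s) := by rw [sum_congr rfl telescope]
    _ = sin (2 * j * s) := two_sin_mul_sum_Icc_cos_odd_mul s j

theorem sin_mul_pi_div_ne_zero {x c : ℝ} (hx : x ≠ 0) (hxc : |x| < c) : sin (x * π / c) ≠ 0 := by
  have hc : 0 < c := (abs_nonneg x).trans_lt hxc
  obtain ⟨hlo, hhi⟩ := abs_lt.mp hxc
  rw [Ne, sin_eq_zero_iff_of_lt_of_lt]
  · exact div_ne_zero (mul_ne_zero hx pi_ne_zero) hc.ne'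
  · rw [lt_div_iff₀ hc]; nlinarith [pi_pos]
  · rw [div_lt_iff₀ hc]; nlinarith [pi_pos]

theorem sum_Icc_cos_two_mul_int_mul_pi_div (m : ℕ) {n : ℤ} (hn : n ≠ 0) (hnm : |n| < 2 * m + 1) :
    ∑ k ∈ Icc 1 m, cos (2 * k * (n * π / (2 * m + 1))) = -(1 / 2) := by
  set s := n * π / (2 * m + 1)
  have hs : sin s ≠ 0 :=
    sin_mul_pi_div_ne_zero (by exact_mod_cast hn) (by rw [← Int.cast_abs]; exact_mod_cast hnm)
  have hsm : sin ((2 * m + 1) * s) = 0 := by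
    rw [show (2 * m + 1) * s = n * π by simp only [s]; field_simp, sin_int_mul_pi]
  have h := two_sin_mul_sum_Icc_cos_two_mul s m
  rw [hsm] at h
  apply mul_left_cancel₀ (mul_ne_zero two_ne_zero hs)
  rw [h]; ring

theorem sum_Icc_sin_mul_sin {b : ℝ} {m r t : ℕ} (hb : b = 2 * m + 1) (hr : r ∈ Icc 1 m)
    (ht : t ∈ Icc 1 m) :
    ∑ j ∈ Icc 1 m, sin ((2 * (r : ℝ) - 1) * j * π / b) * sin ((2 * (t : ℝ) - 1) * j * π / b)
      = if r = t then b / 4 else 0 := by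
  subst hb
  rw [mem_Icc] at hr ht
  set α : ℝ := ((r - t : ℤ) : ℝ) * π / (2 * m + 1)
  set β : ℝ := ((r + t - 1 : ℤ) : ℝ) * π / (2 * m + 1)
  have product_to_sum : ∀ j : ℕ, sin ((2 * (r : ℝ) - 1) * j * π / (2 * m + 1))
        * sin ((2 * (t : ℝ) - 1) * j * π / (2 * m + 1))
      = (cos (2 * j * α) - cos (2 * j * β)) / 2 := by
    intro j
    have hdiff : 2 * j * α = (2 * (r : ℝ) - 1) * j * π / (2 * m + 1)
        - (2 * (t : ℝ) - 1) * j * π / (2 * m + 1) := by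
      simp only [α]; push_cast; ring
    have hsum : 2 * j * β = (2 * (r : ℝ) - 1) * j * π / (2 * m + 1)
        + (2 * (t : ℝ) - 1) * j * π / (2 * m + 1) := by
      simp only [β]; push_cast; ring
    rw [hdiff, hsum, ← two_mul_sin_mul_sin]
    ring
  have hβ : ∑ j ∈ Icc 1 m, cos (2 * j * β) = -(1 / 2) :=
    sum_Icc_cos_two_mul_int_mul_pi_div m (by omega) (by rw [abs_lt]; omega)
  rw [sum_congr rfl fun j _ => product_to_sum j, ← sum_div, sum_sub_distrib, hβ]
  split_ifs with hrt
  · subst hrt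
    simp only [α, sub_self, Int.cast_zero, zero_mul, zero_div, mul_zero, cos_zero, sum_const,
      Nat.card_Icc, add_tsub_cancel_right, nsmul_eq_mul, mul_one]
    ring
  · rw [sum_Icc_cos_two_mul_int_mul_pi_div m (by omega) (by rw [abs_lt]; omega)]
    ring

theorem sum_Icc_min_mul_sin_eq_lamEig_mul {b : ℤ} {m r j : ℕ} (hb : (b : ℝ) = 2 * m + 1)
    (hr : r ∈ Icc 1 m) (hjm : j ≤ m) :
    ∑ k ∈ Icc 1 m, ((min j k : ℕ) : ℝ) * sin ((2 * (r : ℝ) - 1) * k * π / b)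
      = lamEig b r * sin ((2 * (r : ℝ) - 1) * j * π / b) := by
  obtain ⟨hr1, hrm⟩ : (1 : ℝ) ≤ r ∧ (r : ℝ) ≤ m := by
    rw [mem_Icc] at hr; exact ⟨by exact_mod_cast hr.1, by exact_mod_cast hr.2⟩
  have hb0 : (b : ℝ) ≠ 0 := by rw [hb]; positivity
  set s := (2 * (r : ℝ) - 1) * π / (2 * b)
  have hlam : lamEig b r = 1 / (4 * sin s ^ 2) := rfl
  have hangle : ∀ k : ℕ, (2 * (r : ℝ) - 1) * k * π / b = 2 * k * s := by
    intro k; simp only [s]; field_simp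
  have hs : sin s ≠ 0 :=
    sin_mul_pi_div_ne_zero (by linarith) (by rw [abs_of_pos (by linarith)]; linarith)
  have hcos : cos ((2 * m + 1) * s) = 0 := by
    rw [cos_eq_zero_iff]
    exact ⟨r - 1, by simp only [s]; rw [← hb]; field_simp; push_cast; ring⟩
  simp only [hangle]
  rw [hlam, ← four_sin_sq_mul_sum_Icc_min_mul_sin s hjm hcos, one_div,
    inv_mul_cancel_left₀ (by positivity)]

noncomputable def sineMatrix (b : ℤ) (m : ℕ) : Matrix (Fin m) (Fin m) ℝ :=
  of fun j r => sin ((2 * (((r : ℕ) + 1 : ℕ) : ℝ) - 1) * (((j : ℕ) + 1 : ℕ) : ℝ) * π / b)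

section
variable {b : ℤ} {m : ℕ}

theorem minMat_mul_sineMatrix (hb : (b : ℝ) = 2 * m + 1) :
    minMat m * sineMatrix b m
      = sineMatrix b m * diagonal fun r : Fin m => lamEig b ((r : ℕ) + 1) := by
  ext j r
  rw [mul_diagonal, mul_apply, mul_comm]
  convert sum_Icc_min_mul_sin_eq_lamEig_mul hb (r := (r : ℕ) + 1) (j := (j : ℕ) + 1)
    (by simp only [mem_Icc]; omega) (by omega) using 1
  · rw [← sum_fin_succ_eq_sum_Icc m fun k => ((min ((j : ℕ) + 1) k : ℕ) : ℝ)
      * sin ((2 * (((r : ℕ) + 1 : ℕ) : ℝ) - 1) * k * π / b)]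
    simp only [minMat, sineMatrix, of_apply, Nat.cast_min, Nat.cast_add, Nat.cast_one]
  · rfl

theorem sineMatrix_transpose_mul_self (hb : (b : ℝ) = 2 * m + 1) :
    (sineMatrix b m)ᵀ * sineMatrix b m = ((b : ℝ) / 4) • 1 := by
  ext r t
  rw [mul_apply, Matrix.smul_apply, one_apply, smul_ite, smul_zero, smul_eq_mul, mul_one]
  convert sum_Icc_sin_mul_sin hb (r := (r : ℕ) + 1) (t := (t : ℕ) + 1)
    (by simp only [mem_Icc]; omega) (by simp only [mem_Icc]; omega) using 1
  · rw [← sum_fin_succ_eq_sum_Icc m fun j => sin ((2 * (((r : ℕ) + 1 : ℕ) : ℝ) - 1) * j * π / b)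
      * sin ((2 * (((t : ℕ) + 1 : ℕ) : ℝ) - 1) * j * π / b)]
    rfl
  · simp [Fin.ext_iff]

theorem minMat_pow_eq (hb : (b : ℝ) = 2 * m + 1) (l : ℕ) :
    minMat m ^ l = ((4 : ℝ) / b) • (sineMatrix b m
      * diagonal (fun r : Fin m => lamEig b ((r : ℕ) + 1) ^ l) * (sineMatrix b m)ᵀ) := by
  set P := sineMatrix b m
  set Q := ((4 : ℝ) / b) • Pᵀ
  have hb0 : (b : ℝ) ≠ 0 := by rw [hb]; positivity
  have hQP : Q * P = 1 := by
    rw [smul_mul, sineMatrix_transpose_mul_self hb, smul_smul,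
      show (4 : ℝ) / b * (b / 4) = 1 by field_simp, one_smul]
  have hPQ : P * Q = 1 := mul_eq_one_comm.mp hQP
  let u : (Matrix (Fin m) (Fin m) ℝ)ˣ := ⟨P, Q, hPQ, hQP⟩
  have hM : minMat m = P * diagonal (fun r : Fin m => lamEig b ((r : ℕ) + 1)) * Q := by
    rw [← minMat_mul_sineMatrix hb, Matrix.mul_assoc, hPQ, Matrix.mul_one]
  rw [hM]
  refine (Units.conj_pow u _ l).trans ?_
  simp only [u, Units.val_mk, Units.inv_mk, diagonal_pow, Q, Matrix.mul_smul]
  rfl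
theorem sum_sum_mul_minMat_pow (hb : (b : ℝ) = 2 * m + 1) (l : ℕ) (x : ℕ → ℝ) :
    ∑ i : Fin m, ∑ j : Fin m, x ((i : ℕ) + 1) * (minMat m ^ l) i j
      = 4 / (b : ℝ) * ∑ r ∈ Icc 1 m, lamEig b r ^ l * vSum b m r
          * ∑ j ∈ Icc 1 m, x j * sin ((2 * (r : ℝ) - 1) * j * π / b) := by
  set P := sineMatrix b m
  set d := fun r : Fin m => lamEig b ((r : ℕ) + 1) ^ l
  calc ∑ i : Fin m, ∑ j : Fin m, x ((i : ℕ) + 1) * (minMat m ^ l) i j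
      = 4 / (b : ℝ) * ∑ i : Fin m, ∑ j, x ((i : ℕ) + 1) * (P * diagonal d * Pᵀ) i j := by
        simp only [minMat_pow_eq hb, Matrix.smul_apply, smul_eq_mul, mul_sum]
        exact sum_congr rfl fun i _ => sum_congr rfl fun j _ => by ring
    _ = 4 / (b : ℝ) * ∑ r, d r * (∑ j, P j r) * ∑ i : Fin m, x ((i : ℕ) + 1) * P i r := by
        rw [sum_sum_mul_mul_diagonal_mul_transpose]
    _ = _ := by
        rw [← sum_fin_succ_eq_sum_Icc]
        refine congrArg _ (sum_congr rfl fun r _ => ?_)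
        rw [vSum, ← sum_fin_succ_eq_sum_Icc, ← sum_fin_succ_eq_sum_Icc]
        rfl

end

theorem stmt17_general (b : ℤ) (m : ℕ) (hm : b = 2 * (m : ℤ) + 1)
    (l : ℕ) :
    (∑ i : Fin m, ∑ j : Fin m, (minMat m ^ l) i j
        = (4 / (b : ℝ)) * ∑ r ∈ Finset.Icc 1 m, lamEig b r ^ l * vSum b m r ^ 2) ∧
    (∑ i : Fin m, ∑ j : Fin m, (((i : ℕ) + 1 : ℕ) : ℝ) * (minMat m ^ l) i j
        = (4 / (b : ℝ)) * ∑ r ∈ Finset.Icc 1 m, lamEig b r ^ l * vSum b m r * wSum b m r) := by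
  have hbm : (b : ℝ) = 2 * m + 1 := by exact_mod_cast hm
  constructor
  · simpa [sq, vSum, mul_assoc] using sum_sum_mul_minMat_pow hbm l fun _ => 1
  · exact sum_sum_mul_minMat_pow hbm l Nat.cast

theorem stmt17 (b : ℤ) (hodd : Odd b) (hb : 3 ≤ b) (m : ℕ) (hm : b = 2 * (m : ℤ) + 1)
    (l : ℕ) :
    (∑ i : Fin m, ∑ j : Fin m, (minMat m ^ l) i j
        = (4 / (b : ℝ)) * ∑ r ∈ Finset.Icc 1 m, lamEig b r ^ l * vSum b m r ^ 2) ∧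
    (∑ i : Fin m, ∑ j : Fin m, (((i : ℕ) + 1 : ℕ) : ℝ) * (minMat m ^ l) i j
        = (4 / (b : ℝ)) * ∑ r ∈ Finset.Icc 1 m, lamEig b r ^ l * vSum b m r * wSum b m r) :=
  stmt17_general b m hm l
end
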